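/- Let (S,μ) be a standard Borel probability space, let (X,d) be a separable metric space, and let φ and φ_n (n ∈ ℕ) be measure-class-preserving Borel automorphisms of S with φ_n → φ in the Koopman (strong operator) topology. If f and f_n (n ∈ ℕ) are measurable functions S → X with f_n → f in measure, then f_n ∘ φ_n⁻¹ → f ∘ φ⁻¹ in measure. (That is, the natural action of the automorphism group on the space of X-valued measurable functions, with the topology of convergence in measure, is jointly continuous.) -/

import Mathlib

open MeasureTheory Filter Topology

/-!
Write `T = φ⁻¹`, `Tₙ = φₙ⁻¹` and `D` for the density of `φ`. Koopman convergence, applied to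
`1` and to a bounded `h`, gives `√D · (h ∘ Tₙ - h ∘ T) → 0` in measure, and since `D > 0` a.e.
one may divide by `√D`: `h ∘ Tₙ → h ∘ T` in measure, hence `μ (T⁻¹ B \ Tₙ⁻¹ B) → 0` for every
measurable `B`. Taking for `B` the preimages under `f` of balls around a dense sequence of `X`
yields `f ∘ Tₙ → f ∘ T` in measure. The Koopman operators are isometries, so the same division
shows that `μ (Aₙ) → 0` forces `μ (Tₙ⁻¹ Aₙ) → 0`; with `Aₙ = {ε ≤ d(fₙ, f)}` this gives
`d(fₙ ∘ Tₙ, f ∘ Tₙ) → 0` in measure, and the triangle inequality concludes.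
-/

namespace MeasureTheory

variable {α ι E : Type*} {m : MeasurableSpace α} {μ : Measure α} {l : Filter ι}

theorem TendstoInMeasure.of_dist_le_abs_add [PseudoMetricSpace E] {f : ι → α → E} {g : α → E}
    {u v : ι → α → ℝ} (hu : TendstoInMeasure μ u l 0) (hv : TendstoInMeasure μ v l 0)
    (h : ∀ i x, dist (f i x) (g x) ≤ |u i x| + |v i x|) : TendstoInMeasure μ f l g := by
  rw [tendstoInMeasure_iff_dist] at hu hv ⊢
  intro ε hε
  have hsub : ∀ i, {x | ε ≤ dist (f i x) (g x)} ⊆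
      {x | ε / 2 ≤ dist (u i x) ((0 : α → ℝ) x)} ∪ {x | ε / 2 ≤ dist (v i x) ((0 : α → ℝ) x)} := by
    intro i x hx
    by_contra hcon
    simp only [Set.mem_union, Set.mem_ofPred_eq, not_or, not_le, Pi.zero_apply,
      Real.dist_0_eq_abs] at hx hcon
    linarith [h i x]
  refine tendsto_of_tendsto_of_tendsto_of_le_of_le tendsto_const_nhds
    (by simpa using (hu _ (half_pos hε)).add (hv _ (half_pos hε))) (fun _ => zero_le)
    fun i => (measure_mono (hsub i)).trans (measure_union_le _ _)

theorem TendstoInMeasure.of_tendstoInMeasure_dist [PseudoMetricSpace E] {f f' : ι → α → E}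
    {g : α → E} (h₁ : TendstoInMeasure μ (fun i x => dist (f i x) (f' i x)) l 0)
    (h₂ : TendstoInMeasure μ f' l g) : TendstoInMeasure μ f l g := by
  have h₂' : TendstoInMeasure μ (fun i x => dist (f' i x) (g x)) l 0 := by
    simpa [tendstoInMeasure_iff_dist] using h₂
  refine h₁.of_dist_le_abs_add h₂' fun i x => ?_
  simpa only [abs_dist] using dist_triangle _ _ _

theorem tendsto_measure_setOf_le_nhdsGT_zero [IsFiniteMeasure μ] {g : α → ℝ} (hg : Measurable g)
    (hpos : ∀ᵐ x ∂μ, 0 < g x) : Tendsto (fun c => μ {x | g x ≤ c}) (𝓝[>] 0) (𝓝 0) := by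
  have hnull : μ (⋂ c > (0 : ℝ), {x | g x ≤ c}) = 0 := by
    refine measure_mono_null (fun x hx => ?_) (ae_iff.mp hpos)
    simp only [Set.mem_iInter, Set.mem_ofPred_eq, not_lt] at hx ⊢
    exact le_of_forall_gt_imp_ge_of_dense hx
  rw [← hnull]
  exact tendsto_measure_biInter_gt
    (fun _ _ => (measurableSet_le hg measurable_const).nullMeasurableSet)
    (fun _ _ _ hcd _ hx => le_trans hx hcd) ⟨1, one_pos, measure_ne_top _ _⟩

theorem TendstoInMeasure.of_mul_dist [IsFiniteMeasure μ] [PseudoMetricSpace E] {f : ι → α → E}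
    {f' : α → E} {g : α → ℝ} (hg : Measurable g) (hpos : ∀ᵐ x ∂μ, 0 < g x)
    (h : TendstoInMeasure μ (fun i x => g x * dist (f i x) (f' x)) l 0) :
    TendstoInMeasure μ f l f' := by
  rw [tendstoInMeasure_iff_dist] at h ⊢
  intro ε hε
  rw [ENNReal.tendsto_nhds_zero]
  intro η hη
  obtain ⟨c, hcη, hc⟩ : ∃ c, μ {x | g x ≤ c} ≤ η / 2 ∧ 0 < c :=
    ((ENNReal.tendsto_nhds_zero.mp (tendsto_measure_setOf_le_nhdsGT_zero hg hpos) _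
      (ENNReal.half_pos hη.ne')).and self_mem_nhdsWithin).exists
  filter_upwards [ENNReal.tendsto_nhds_zero.mp (h (c * ε) (by positivity)) _
    (ENNReal.half_pos hη.ne')] with i hi
  have hsub : {x | ε ≤ dist (f i x) (f' x)} ⊆
      {x | g x ≤ c} ∪ {x | c * ε ≤ dist (g x * dist (f i x) (f' x)) ((0 : α → ℝ) x)} := by
    intro x hx
    by_contra hcon
    simp only [Set.mem_union, Set.mem_ofPred_eq, not_or, not_le, Pi.zero_apply,
      Real.dist_0_eq_abs] at hx hcon
    have : c * ε ≤ g x * dist (f i x) (f' x) := mul_le_mul hcon.1.le hx hε.le (by linarith)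
    linarith [le_abs_self (g x * dist (f i x) (f' x))]
  calc μ {x | ε ≤ dist (f i x) (f' x)} ≤ η / 2 + η / 2 :=
        (measure_mono hsub).trans ((measure_union_le _ _).trans (add_le_add hcη hi))
    _ = η := ENNReal.add_halves η

theorem tendstoInMeasure_zero_of_tendsto_lintegral_sq {u : ι → α → ℝ} (hu : ∀ i, Measurable (u i))
    (h : Tendsto (fun i => ∫⁻ x, ENNReal.ofReal (u i x ^ 2) ∂μ) l (𝓝 0)) :
    TendstoInMeasure μ u l 0 := by
  rw [tendstoInMeasure_iff_dist]
  intro ε hε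
  have hε2 : ENNReal.ofReal (ε ^ 2) ≠ 0 := (ENNReal.ofReal_pos.mpr (by positivity)).ne'
  have hmarkov : ∀ i, μ {x | ε ≤ dist (u i x) ((0 : α → ℝ) x)} ≤
      (∫⁻ x, ENNReal.ofReal (u i x ^ 2) ∂μ) / ENNReal.ofReal (ε ^ 2) := fun i =>
    (measure_mono fun x hx => ?_).trans (meas_ge_le_lintegral_div
      ((hu i).pow_const 2).ennreal_ofReal.aemeasurable hε2 ENNReal.ofReal_ne_top)
  · refine tendsto_of_tendsto_of_tendsto_of_le_of_le tendsto_const_nhds ?_ (fun _ => zero_le)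
      hmarkov
    simpa using ENNReal.Tendsto.div_const h (Or.inr hε2)
  · simp only [Set.mem_ofPred_eq, Pi.zero_apply, Real.dist_0_eq_abs] at hx ⊢
    exact ENNReal.ofReal_le_ofReal (by nlinarith [sq_abs (u i x)])

theorem tendstoInMeasure_zero_of_tendsto_integral_sq {u : ι → α → ℝ} (hu : ∀ i, Measurable (u i))
    (hint : ∀ i, Integrable (fun x => u i x ^ 2) μ)
    (h : Tendsto (fun i => ∫ x, u i x ^ 2 ∂μ) l (𝓝 0)) : TendstoInMeasure μ u l 0 := by
  refine tendstoInMeasure_zero_of_tendsto_lintegral_sq hu ?_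
  simpa [← ofReal_integral_eq_lintegral_ofReal (hint _) (ae_of_all _ fun _ => sq_nonneg _)]
    using ENNReal.tendsto_ofReal h

theorem tendstoInMeasure_of_tendsto_measure_preimage_ball_diff [IsFiniteMeasure μ]
    [PseudoMetricSpace E] [TopologicalSpace.SeparableSpace E] [MeasurableSpace E]
    [OpensMeasurableSpace E] {F : ι → α → E} {G : α → E} (hG : Measurable G)
    (h : ∀ x r, Tendsto (fun i => μ (G ⁻¹' Metric.ball x r \ F i ⁻¹' Metric.ball x r)) l (𝓝 0)) :
    TendstoInMeasure μ F l G := by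
  rw [tendstoInMeasure_iff_dist]
  intro ε hε
  rcases isEmpty_or_nonempty α with hα | ⟨⟨a⟩⟩
  · simpa [Set.eq_empty_of_isEmpty] using tendsto_const_nhds
  have : Nonempty E := ⟨G a⟩
  set x := TopologicalSpace.denseSeq E
  set far : ℕ → Set α := fun K => G ⁻¹' ⋂ k ∈ Finset.range (K + 1), (Metric.ball (x k) (ε / 2))ᶜ
  have hfar : Tendsto (fun K => μ (far K)) atTop (𝓝 0) := by
    have hempty : ⋂ K, far K = ∅ := by
      refine Set.eq_empty_of_forall_notMem fun s hs => ?_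
      obtain ⟨k, hk⟩ := (TopologicalSpace.denseRange_denseSeq E).exists_dist_lt (G s) (half_pos hε)
      simp only [far, Set.mem_iInter, Set.mem_preimage, Set.mem_compl_iff, Metric.mem_ball] at hs
      exact hs k k (Finset.mem_range.mpr k.lt_succ_self) hk
    rw [← measure_empty (μ := μ), ← hempty]
    refine tendsto_measure_iInter_atTop (fun K => (hG ?_).nullMeasurableSet) (fun K K' hKK' => ?_)
      ⟨0, measure_ne_top _ _⟩
    · exact .biInter (Finset.range _).countable_toSet
        fun _ _ => Metric.isOpen_ball.measurableSet.compl
    · exact Set.preimage_mono (Set.biInter_subset_biInter_left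
        (Finset.coe_subset.mpr (Finset.range_subset_range.mpr (by omega))))
  rw [ENNReal.tendsto_nhds_zero]
  intro η hη
  obtain ⟨K, hK⟩ := (ENNReal.tendsto_nhds_zero.mp hfar _ (ENNReal.half_pos hη.ne')).exists
  have hsum := tendsto_finsetSum (Finset.range (K + 1)) fun k _ => h (x k) (ε / 2)
  rw [Finset.sum_const_zero] at hsum
  filter_upwards [ENNReal.tendsto_nhds_zero.mp hsum _ (ENNReal.half_pos hη.ne')] with i hi
  have hsub : {s | ε ≤ dist (F i s) (G s)} ⊆ far K ∪ ⋃ k ∈ Finset.range (K + 1),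
      G ⁻¹' Metric.ball (x k) (ε / 2) \ F i ⁻¹' Metric.ball (x k) (ε / 2) := by
    intro s hs
    by_contra hcon
    simp only [far, Set.mem_union, Set.mem_iUnion, Set.mem_sdiff, Set.mem_preimage, Set.mem_iInter,
      Set.mem_compl_iff, Metric.mem_ball, not_or, not_forall, not_not, exists_prop] at hcon
    obtain ⟨⟨k, hk, hGk⟩, hF⟩ := hcon
    refine hF ⟨k, hk, hGk, fun hFk => ?_⟩
    linarith [dist_triangle_right (F i s) (G s) (x k), hs.out]
  calc μ {s | ε ≤ dist (F i s) (G s)}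
      ≤ μ (far K) + ∑ k ∈ Finset.range (K + 1),
          μ (G ⁻¹' Metric.ball (x k) (ε / 2) \ F i ⁻¹' Metric.ball (x k) (ε / 2)) :=
        (measure_mono hsub).trans ((measure_union_le _ _).trans
          (add_le_add_right (measure_biUnion_finset_le _ _) _))
    _ ≤ η / 2 + η / 2 := add_le_add hK hi
    _ = η := ENNReal.add_halves η

end MeasureTheory

section Koopman

variable {S ι : Type*} [MeasurableSpace S] {μ : Measure S} {l : Filter ι}

noncomputable def sqrtDensity (μ : Measure S) (e : S ≃ᵐ S) (s : S) : ℝ :=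
  Real.sqrt ((μ.map e).rnDeriv μ s).toReal

noncomputable def koopman (μ : Measure S) (e : S ≃ᵐ S) (h : S → ℝ) (s : S) : ℝ :=
  sqrtDensity μ e s * h (e.symm s)

def KoopmanTendsto (μ : Measure S) (φs : ι → S ≃ᵐ S) (l : Filter ι) (φ : S ≃ᵐ S) : Prop :=
  ∀ h : S → ℝ, Measurable h → Integrable (fun s => h s ^ 2) μ →
    Tendsto (fun i => ∫ s, (koopman μ (φs i) h s - koopman μ φ h s) ^ 2 ∂μ) l (𝓝 0)

theorem measurable_sqrtDensity (μ : Measure S) (e : S ≃ᵐ S) : Measurable (sqrtDensity μ e) :=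
  (Measure.measurable_rnDeriv _ _).ennreal_toReal.sqrt

theorem sqrtDensity_sq (μ : Measure S) (e : S ≃ᵐ S) (s : S) :
    sqrtDensity μ e s ^ 2 = ((μ.map e).rnDeriv μ s).toReal :=
  Real.sq_sqrt ENNReal.toReal_nonneg

theorem ae_sqrtDensity_pos [IsFiniteMeasure μ] {e : S ≃ᵐ S} (he : μ ≪ μ.map e) :
    ∀ᵐ s ∂μ, 0 < sqrtDensity μ e s := by
  filter_upwards [Measure.rnDeriv_pos' he, Measure.rnDeriv_lt_top (μ.map e) μ] with s hpos htop
  exact Real.sqrt_pos.mpr (ENNReal.toReal_pos hpos.ne' htop.ne)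

theorem Measurable.koopman {e : S ≃ᵐ S} {h : S → ℝ} (hh : Measurable h) :
    Measurable (koopman μ e h) :=
  (measurable_sqrtDensity μ e).mul (hh.comp e.symm.measurable)

theorem koopman_sq_le {e : S ≃ᵐ S} {h : S → ℝ} (hb : ∀ s, |h s| ≤ 1) (s : S) :
    koopman μ e h s ^ 2 ≤ ((μ.map e).rnDeriv μ s).toReal := by
  rw [koopman, mul_pow, sqrtDensity_sq]
  exact mul_le_of_le_one_right ENNReal.toReal_nonneg ((sq_le_one_iff_abs_le_one _).mpr (hb _))

theorem integrable_sq_koopman_sub [IsFiniteMeasure μ] {e e' : S ≃ᵐ S} {h : S → ℝ}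
    (hh : Measurable h) (hb : ∀ s, |h s| ≤ 1) :
    Integrable (fun s => (koopman μ e h s - koopman μ e' h s) ^ 2) μ := by
  refine (((Measure.integrable_toReal_rnDeriv (μ := μ.map e) (ν := μ)).const_mul 2).add
    ((Measure.integrable_toReal_rnDeriv (μ := μ.map e') (ν := μ)).const_mul 2)).mono'
    ((hh.koopman.sub hh.koopman).pow_const 2).aestronglyMeasurable (ae_of_all _ fun s => ?_)
  rw [Real.norm_eq_abs, abs_of_nonneg (sq_nonneg _), Pi.add_apply]
  nlinarith [koopman_sq_le (μ := μ) (e := e) hb s, koopman_sq_le (μ := μ) (e := e') hb s,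
    sq_nonneg (koopman μ e h s + koopman μ e' h s)]

theorem lintegral_ofReal_koopman_sq [IsFiniteMeasure μ] {e : S ≃ᵐ S} (he : μ.map e ≪ μ)
    {h : S → ℝ} (hh : Measurable h) :
    ∫⁻ s, ENNReal.ofReal (koopman μ e h s ^ 2) ∂μ = ∫⁻ s, ENNReal.ofReal (h s ^ 2) ∂μ := by
  calc ∫⁻ s, ENNReal.ofReal (koopman μ e h s ^ 2) ∂μ
      = ∫⁻ s, (μ.map e).rnDeriv μ s * ENNReal.ofReal (h (e.symm s) ^ 2) ∂μ := by
        refine lintegral_congr_ae ?_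
        filter_upwards [Measure.rnDeriv_lt_top (μ.map e) μ] with s hs
        rw [koopman, mul_pow, sqrtDensity_sq, ENNReal.ofReal_mul ENNReal.toReal_nonneg,
          ENNReal.ofReal_toReal hs.ne]
    _ = ∫⁻ s, ENNReal.ofReal (h (e.symm s) ^ 2) ∂(μ.map e) :=
        lintegral_rnDeriv_mul he (by fun_prop)
    _ = ∫⁻ s, ENNReal.ofReal (h s ^ 2) ∂μ := by
        rw [lintegral_map_equiv]
        simp

theorem abs_mul_dist_le {a b x y : ℝ} (hx : |x| ≤ 1) :
    |b * dist x y| ≤ |a * x - b * y| + |a - b| := by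
  rw [Real.dist_eq, abs_mul, abs_abs, ← abs_mul,
    show b * (x - y) = (a * x - b * y) - (a - b) * x by ring]
  refine (abs_sub _ _).trans (add_le_add_right ?_ _)
  rw [abs_mul]
  exact mul_le_of_le_one_right (abs_nonneg _) hx

namespace KoopmanTendsto

variable [IsFiniteMeasure μ] {φs : ι → S ≃ᵐ S} {φ : S ≃ᵐ S}

theorem tendstoInMeasure_koopman_sub (hK : KoopmanTendsto μ φs l φ) {h : S → ℝ}
    (hh : Measurable h) (hb : ∀ s, |h s| ≤ 1) :
    TendstoInMeasure μ (fun i s => koopman μ (φs i) h s - koopman μ φ h s) l 0 :=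
  tendstoInMeasure_zero_of_tendsto_integral_sq (fun _ => hh.koopman.sub hh.koopman)
    (fun _ => integrable_sq_koopman_sub hh hb)
    (hK h hh (Integrable.of_bound (hh.pow_const 2).aestronglyMeasurable 1
      (ae_of_all _ fun s => by simpa using (sq_le_one_iff_abs_le_one _).mpr (hb s))))

theorem tendstoInMeasure_comp_symm (hK : KoopmanTendsto μ φs l φ) (hφ : μ ≪ μ.map φ)
    {h : S → ℝ} (hh : Measurable h) (hb : ∀ s, |h s| ≤ 1) :
    TendstoInMeasure μ (fun i s => h ((φs i).symm s)) l (fun s => h (φ.symm s)) := by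
  refine TendstoInMeasure.of_mul_dist (measurable_sqrtDensity μ φ) (ae_sqrtDensity_pos hφ) ?_
  refine (hK.tendstoInMeasure_koopman_sub hh hb).of_dist_le_abs_add
    (hK.tendstoInMeasure_koopman_sub measurable_const fun _ => abs_one.le) fun i s => ?_
  simpa [Real.dist_0_eq_abs, koopman] using abs_mul_dist_le (a := sqrtDensity μ (φs i) s)
    (b := sqrtDensity μ φ s) (y := h (φ.symm s)) (hb ((φs i).symm s))

theorem tendsto_measure_preimage_symm_diff (hK : KoopmanTendsto μ φs l φ) (hφ : μ ≪ μ.map φ)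
    {B : Set S} (hB : MeasurableSet B) :
    Tendsto (fun i => μ (φ.symm ⁻¹' B \ (φs i).symm ⁻¹' B)) l (𝓝 0) := by
  have hind := hK.tendstoInMeasure_comp_symm hφ (measurable_const.indicator hB)
    (h := B.indicator 1) fun s => by by_cases hs : s ∈ B <;> simp [hs]
  refine tendsto_of_tendsto_of_tendsto_of_le_of_le tendsto_const_nhds
    ((tendstoInMeasure_iff_dist.mp hind) 1 one_pos) (fun _ => zero_le)
    fun i => measure_mono fun s ⟨hs, hns⟩ => ?_
  simp_all

theorem tendsto_measure_preimage_symm (hK : KoopmanTendsto μ φs l φ) (hφ : μ ≪ μ.map φ)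
    (hφs : ∀ i, μ.map (φs i) ≪ μ) {A : ι → Set S} (hA : ∀ i, MeasurableSet (A i))
    (hA0 : Tendsto (fun i => μ (A i)) l (𝓝 0)) :
    Tendsto (fun i => μ ((φs i).symm ⁻¹' A i)) l (𝓝 0) := by
  have hkoopman :
      TendstoInMeasure μ (fun i => koopman μ (φs i) ((A i).indicator (1 : S → ℝ))) l 0 := by
    refine tendstoInMeasure_zero_of_tendsto_lintegral_sq
      (fun i => (measurable_one.indicator (hA i)).koopman) ?_
    refine hA0.congr fun i => ?_
    rw [lintegral_ofReal_koopman_sq (hφs i) (measurable_one.indicator (hA i)),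
      ← lintegral_indicator_one (hA i)]
    congr with s
    by_cases hs : s ∈ A i <;> simp [hs]
  have hind : TendstoInMeasure μ (fun i s => (A i).indicator (1 : S → ℝ) ((φs i).symm s)) l 0 := by
    refine TendstoInMeasure.of_mul_dist (measurable_sqrtDensity μ φ) (ae_sqrtDensity_pos hφ) ?_
    refine hkoopman.of_dist_le_abs_add
      (hK.tendstoInMeasure_koopman_sub measurable_const fun _ => abs_one.le) fun i s => ?_
    simpa [Real.dist_0_eq_abs, koopman] using abs_mul_dist_le (a := sqrtDensity μ (φs i) s)
      (b := sqrtDensity μ φ s) (y := 0) (x := (A i).indicator (1 : S → ℝ) ((φs i).symm s))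
      (by by_cases hs : (φs i).symm s ∈ A i <;> simp [hs])
  refine tendsto_of_tendsto_of_tendsto_of_le_of_le tendsto_const_nhds
    ((tendstoInMeasure_iff_dist.mp hind) 1 one_pos) (fun _ => zero_le)
    fun i => measure_mono fun s hs => ?_
  simp_all

end KoopmanTendsto

end Koopman

theorem koopman_action_on_functions_continuous_general
    {S : Type*} [MeasurableSpace S]
    {X : Type*} [MetricSpace X] [TopologicalSpace.SeparableSpace X]
    [MeasurableSpace X] [BorelSpace X]
    (μ : Measure S) [IsProbabilityMeasure μ]
    (φ : S ≃ᵐ S) (φn : ℕ → S ≃ᵐ S)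
    (hφ : μ.map φ ≪ μ ∧ μ ≪ μ.map φ)
    (hφn : ∀ n, μ.map (φn n) ≪ μ ∧ μ ≪ μ.map (φn n))
    (hK : ∀ h : S → ℝ, Measurable h → Integrable (fun s => (h s) ^ 2) μ →
      Tendsto
        (fun n => ∫ s,
          (Real.sqrt (((μ.map (φn n)).rnDeriv μ s).toReal) * h ((φn n).symm s)
            - Real.sqrt (((μ.map φ).rnDeriv μ s).toReal) * h (φ.symm s)) ^ 2 ∂μ)
        atTop (𝓝 0))
    (f : S → X) (fn : ℕ → S → X)
    (hf : Measurable f) (hfn : ∀ n, Measurable (fn n))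
    (hconv : TendstoInMeasure μ fn atTop f) :
    TendstoInMeasure μ (fun n s => fn n ((φn n).symm s)) atTop
      (fun s => f (φ.symm s)) := by
  have hK' : KoopmanTendsto μ φn atTop φ := hK
  have hpull : TendstoInMeasure μ
      (fun n s => dist (fn n ((φn n).symm s)) (f ((φn n).symm s))) atTop 0 := by
    rw [tendstoInMeasure_iff_dist]
    intro ε hε
    simpa [Real.dist_0_eq_abs] using hK'.tendsto_measure_preimage_symm hφ.2 (fun n => (hφn n).1)
      (fun n => measurableSet_le measurable_const ((hfn n).dist hf))
      ((tendstoInMeasure_iff_dist.mp hconv) ε hε)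
  refine hpull.of_tendstoInMeasure_dist (tendstoInMeasure_of_tendsto_measure_preimage_ball_diff
    (hf.comp φ.symm.measurable) fun x r => ?_)
  exact hK'.tendsto_measure_preimage_symm_diff hφ.2 (hf Metric.isOpen_ball.measurableSet)

/-- The natural action of the group of measure-class-preserving
automorphisms of a standard Borel probability space `(S, μ)` on the space of
measurable functions `S → X` (with the topology of convergence in measure) is
jointly continuous: if `φₙ → φ` in the Koopman topology and `fₙ → f` in
measure, then `fₙ ∘ φₙ⁻¹ → f ∘ φ⁻¹` in measure. -/
theorem koopman_action_on_functions_continuous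
    {S : Type*} [MeasurableSpace S] [StandardBorelSpace S]
    {X : Type*} [MetricSpace X] [TopologicalSpace.SeparableSpace X]
    [MeasurableSpace X] [BorelSpace X]
    (μ : Measure S) [IsProbabilityMeasure μ]
    (φ : S ≃ᵐ S) (φn : ℕ → S ≃ᵐ S)
    (hφ : μ.map φ ≪ μ ∧ μ ≪ μ.map φ)
    (hφn : ∀ n, μ.map (φn n) ≪ μ ∧ μ ≪ μ.map (φn n))
    (hK : ∀ h : S → ℝ, Measurable h → Integrable (fun s => (h s) ^ 2) μ →
      Tendsto
        (fun n => ∫ s,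
          (Real.sqrt (((μ.map (φn n)).rnDeriv μ s).toReal) * h ((φn n).symm s)
            - Real.sqrt (((μ.map φ).rnDeriv μ s).toReal) * h (φ.symm s)) ^ 2 ∂μ)
        atTop (𝓝 0))
    (f : S → X) (fn : ℕ → S → X)
    (hf : Measurable f) (hfn : ∀ n, Measurable (fn n))
    (hconv : TendstoInMeasure μ fn atTop f) :
    TendstoInMeasure μ (fun n s => fn n ((φn n).symm s)) atTop
      (fun s => f (φ.symm s)) :=
  koopman_action_on_functions_continuous_general μ φ φn hφ hφn hK f fn hf hfn hconv
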